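/- For the two-qubit operator X = 6|ψ⁺⟩⟨ψ⁺| − |00⟩⟨00| − 2|11⟩⟨11| with |ψ⁺⟩ = (|01⟩+|10⟩)/√2, the maximum of |⟨φ|X|φ⟩| over product states |φ⟩=|a⟩|b⟩ equals 3 (attained at |01⟩), while the maximum over symmetric product states |a⟩|a⟩ equals 34/15 < 3. -/

import Mathlib

/-!
In terms of `p = ‖a 0‖`, `q = ‖a 1‖`, `r = ‖b 0‖`, `s = ‖b 1‖` the expectation is
`3 ‖a 0 b 1 + a 1 b 0‖² - p²r² - 2 q²s²`. Since `‖a 0 b 1 + a 1 b 0‖ ≤ ps + qr` and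
`(ps + qr)² + (pr - qs)² = (p² + q²)(r² + s²) = 1`, it lies in `[-2, 3]`, and `|01⟩` gives `3`.
For `a = b` it is the concave quadratic `-15t² + 16t - 2` in `t = p² ∈ [0, 1]`, whose values
lie in `[-2, 34/15]` with the maximum at `t = 8/15`.
-/

/-- ⟨a⊗b| X |a⊗b⟩ for X = 6|ψ⁺⟩⟨ψ⁺| − |00⟩⟨00| − 2|11⟩⟨11| with
|ψ⁺⟩ = (|01⟩+|10⟩)/√2, evaluated on the product state a⊗b. -/
noncomputable def expX (a b : Fin 2 → ℂ) : ℝ :=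
  6 * ‖(a 0 * b 1 + a 1 * b 0) / (Real.sqrt 2 : ℂ)‖ ^ 2
    - ‖a 0 * b 0‖ ^ 2 - 2 * ‖a 1 * b 1‖ ^ 2

lemma expX_eq (a b : Fin 2 → ℂ) :
    expX a b = 3 * ‖a 0 * b 1 + a 1 * b 0‖ ^ 2
      - ‖a 0‖ ^ 2 * ‖b 0‖ ^ 2 - 2 * (‖a 1‖ ^ 2 * ‖b 1‖ ^ 2) := by
  rw [expX, norm_div, Complex.norm_real, Real.norm_of_nonneg (Real.sqrt_nonneg 2), div_pow,
    Real.sq_sqrt zero_le_two, norm_mul, norm_mul]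
  ring

lemma abs_expX_le_three (a b : Fin 2 → ℂ)
    (ha : ∑ i, ‖a i‖ ^ 2 = 1) (hb : ∑ i, ‖b i‖ ^ 2 = 1) :
    |expX a b| ≤ 3 := by
  rw [Fin.sum_univ_two] at ha hb
  rw [expX_eq]
  set p := ‖a 0‖
  set q := ‖a 1‖
  set r := ‖b 0‖
  set s := ‖b 1‖
  have hz : ‖a 0 * b 1 + a 1 * b 0‖ ≤ p * s + q * r := by
    simpa only [norm_mul] using norm_add_le (a 0 * b 1) (a 1 * b 0)
  have lagrange : (p * s + q * r) ^ 2 + (p * r - q * s) ^ 2 = 1 := by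
    linear_combination (r ^ 2 + s ^ 2) * ha + hb
  have hz_sq : ‖a 0 * b 1 + a 1 * b 0‖ ^ 2 ≤ 1 := by
    nlinarith [pow_le_pow_left₀ (norm_nonneg _) hz 2, sq_nonneg (p * r - q * s)]
  have hpr : p ^ 2 * r ^ 2 ≤ 1 := by nlinarith [sq_nonneg (q * r), sq_nonneg (p * s)]
  have hqs : q ^ 2 * s ^ 2 ≤ 1 := by nlinarith [sq_nonneg (q * r), sq_nonneg (p * s)]
  rw [abs_le]
  constructor <;> nlinarith [sq_nonneg ‖a 0 * b 1 + a 1 * b 0‖, mul_nonneg (sq_nonneg p)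
    (sq_nonneg r), mul_nonneg (sq_nonneg q) (sq_nonneg s)]

lemma expX_self (a : Fin 2 → ℂ) (ha : ∑ i, ‖a i‖ ^ 2 = 1) :
    expX a a = -15 * (‖a 0‖ ^ 2) ^ 2 + 16 * ‖a 0‖ ^ 2 - 2 := by
  rw [Fin.sum_univ_two] at ha
  have h : a 0 * a 1 + a 1 * a 0 = 2 * (a 0 * a 1) := by ring
  rw [expX_eq, h, norm_mul, norm_mul, Complex.norm_two]
  linear_combination (14 * ‖a 0‖ ^ 2 - 2 * ‖a 1‖ ^ 2 - 2) * ha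

lemma abs_quadratic_le {t : ℝ} (h0 : 0 ≤ t) (h1 : t ≤ 1) :
    |-15 * t ^ 2 + 16 * t - 2| ≤ 34 / 15 := by
  rw [abs_le]
  constructor <;> nlinarith [sq_nonneg (15 * t - 8)]

lemma abs_expX_self_le (a : Fin 2 → ℂ) (ha : ∑ i, ‖a i‖ ^ 2 = 1) :
    |expX a a| ≤ 34 / 15 := by
  rw [expX_self a ha]
  rw [Fin.sum_univ_two] at ha
  exact abs_quadratic_le (sq_nonneg _) (by nlinarith [sq_nonneg ‖a 1‖])

/-- For X = 6|ψ⁺⟩⟨ψ⁺| − |00⟩⟨00| − 2|11⟩⟨11|, the maximum of |⟨φ|X|φ⟩| over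
product states is 3, attained at |01⟩, while the maximum over symmetric product
states is 34/15 < 3. -/
theorem stmt_18 :
    IsGreatest {x : ℝ | ∃ a b : Fin 2 → ℂ,
        (∑ i, ‖a i‖ ^ 2 = 1) ∧ (∑ i, ‖b i‖ ^ 2 = 1) ∧
        x = |expX a b|} 3 ∧
    |expX ![1, 0] ![0, 1]| = 3 ∧
    IsGreatest {x : ℝ | ∃ a : Fin 2 → ℂ,
        (∑ i, ‖a i‖ ^ 2 = 1) ∧ x = |expX a a|} (34 / 15) ∧
    (34 / 15 : ℝ) < 3 := by
  have h01 : |expX ![1, 0] ![0, 1]| = 3 := by norm_num [expX_eq]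
  let v : Fin 2 → ℂ := ![(Real.sqrt (8 / 15) : ℂ), (Real.sqrt (7 / 15) : ℂ)]
  have hv0 : ‖v 0‖ ^ 2 = 8 / 15 := by
    simp only [v, Matrix.cons_val_zero, Complex.norm_real, Real.norm_eq_abs, sq_abs]
    exact Real.sq_sqrt (by norm_num)
  have hv1 : ‖v 1‖ ^ 2 = 7 / 15 := by
    simp only [v, Matrix.cons_val_one, Matrix.cons_val_zero, Complex.norm_real, Real.norm_eq_abs,
      sq_abs]
    exact Real.sq_sqrt (by norm_num)
  have hv : ∑ i, ‖v i‖ ^ 2 = 1 := by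
    rw [Fin.sum_univ_two, hv0, hv1]
    norm_num
  refine ⟨⟨⟨![1, 0], ![0, 1], by simp, by simp, h01.symm⟩, ?_⟩, h01,
    ⟨⟨v, hv, ?_⟩, ?_⟩, by norm_num⟩
  · rintro x ⟨a, b, ha, hb, rfl⟩
    exact abs_expX_le_three a b ha hb
  · rw [expX_self v hv, hv0]
    norm_num
  · rintro x ⟨a, ha, rfl⟩
    exact abs_expX_self_le a ha
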